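/- arXiv:0708.1267 — 3 statements merged into one kernel-verified Lean document; each statement's English description precedes it below -/
import Mathlib

section
/- Let ⟨·,·⟩ be a nondegenerate symmetric bilinear form on a countable-dimensional complex vector space V. An isotropic subspace M ⊆ V is maximal isotropic if and only if M is closed (M = M^⊥⊥) and dim(M^⊥/M) ≤ 1. -/
/-! Let `P = M^⊥`. If `M` is maximal isotropic, then `M^⊥⊥` is isotropic and contains `M`, so
`M` is closed; and every isotropic vector of `P` lies in `M`. Take `x ∈ P \ M`, so `B x x ≠ 0`.
For `z ∈ P` with `B x z = 0` and `B z z ≠ 0`, the vector `x + t z` with `t² = -B x x / B z z`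
(a square root exists in `ℂ`) would be isotropic, hence in `M`, hence orthogonal to `x`, forcing
`B x x = 0`. So `B z z = 0` and `z ∈ M`; writing `y ∈ P` as `c x + z` shows `dim P/M ≤ 1`.
Conversely, an isotropic `N ⊇ M` lies in `P`, so `N = M` or `N = P`; in the latter case
`N ≤ N^⊥ = M^⊥⊥ = M`. -/

/-- The perpendicular complement of a subspace of `V` with respect to a
bilinear form `B` on `V`. -/
def perp {V : Type*} [AddCommGroup V] [Module ℂ V]
    (B : V →ₗ[ℂ] V →ₗ[ℂ] ℂ) (F : Submodule ℂ V) : Submodule ℂ V where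
  carrier := {y | ∀ x ∈ F, B x y = 0}
  add_mem' := by intro a b ha hb x hx; simp [map_add, ha x hx, hb x hx]
  zero_mem' := by intro x hx; simp
  smul_mem' := by intro c a ha x hx; simp [ha x hx]

namespace Submodule

variable {K W : Type*} [DivisionRing K] [AddCommGroup W] [Module K W] {M N P : Submodule K W}

theorem rank_quotient_comap_subtype_le_one_iff :
    Module.rank K (P ⧸ M.comap P.subtype) ≤ 1 ↔ ∃ x ∈ P, ∀ y ∈ P, ∃ c : K, y - c • x ∈ M := by
  rw [rank_le_one_iff]
  constructor
  · rintro ⟨v₀, hv₀⟩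
    obtain ⟨⟨x, hx⟩, rfl⟩ := Quotient.mk_surjective _ v₀
    refine ⟨x, hx, fun y hy => ?_⟩
    obtain ⟨c, hc⟩ := hv₀ (Quotient.mk ⟨y, hy⟩)
    rw [← Quotient.mk_smul, Quotient.eq, mem_comap, ← neg_mem_iff] at hc
    exact ⟨c, by simpa using hc⟩
  · rintro ⟨x, hx, hspan⟩
    refine ⟨Quotient.mk ⟨x, hx⟩, fun v => ?_⟩
    obtain ⟨⟨y, hy⟩, rfl⟩ := Quotient.mk_surjective _ v
    obtain ⟨c, hc⟩ := hspan y hy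
    refine ⟨c, ?_⟩
    rw [← Quotient.mk_smul, Quotient.eq, mem_comap, ← neg_mem_iff]
    simpa using hc

theorem eq_or_eq_of_rank_quotient_comap_subtype_le_one
    (h : Module.rank K (P ⧸ M.comap P.subtype) ≤ 1) (hMN : M ≤ N) (hNP : N ≤ P) :
    N = M ∨ N = P := by
  by_cases hNM : N ≤ M
  · exact .inl (le_antisymm hNM hMN)
  right
  obtain ⟨v, hvN, hvM⟩ := SetLike.not_le_iff_exists.mp hNM
  obtain ⟨x, -, hspan⟩ := rank_quotient_comap_subtype_le_one_iff.mp h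
  obtain ⟨c, hc⟩ := hspan v (hNP hvN)
  have hc0 : c ≠ 0 := by
    rintro rfl
    exact hvM (by simpa using hc)
  have hxN : x ∈ N := by
    have hx : x = c⁻¹ • (v - (v - c • x)) := by rw [sub_sub_cancel, inv_smul_smul₀ hc0]
    rw [hx]
    exact N.smul_mem _ (N.sub_mem hvN (hMN hc))
  refine le_antisymm hNP fun y hy => ?_
  obtain ⟨d, hd⟩ := hspan y hy
  simpa using N.add_mem (hMN hd) (N.smul_mem d hxN)

end Submodule

section Perp

variable {V : Type*} [AddCommGroup V] [Module ℂ V] {B : V →ₗ[ℂ] V →ₗ[ℂ] ℂ} {M : Submodule ℂ V}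

theorem perp_anti {F G : Submodule ℂ V} (h : F ≤ G) : perp B G ≤ perp B F :=
  fun _ hy x hx => hy x (h hx)

theorem le_perp_perp (hSym : ∀ x y : V, B x y = B y x) :
    M ≤ perp B (perp B M) :=
  fun m hm x hx => (hSym x m).trans (hx m hm)

theorem sup_span_singleton_le_perp (hSym : ∀ x y : V, B x y = B y x) (hM : M ≤ perp B M)
    {v : V} (hv : v ∈ perp B M) (hvv : B v v = 0) :
    M ⊔ Submodule.span ℂ {v} ≤ perp B (M ⊔ Submodule.span ℂ {v}) := by
  intro y hy x hx
  obtain ⟨m, hm, s, hs, rfl⟩ := Submodule.mem_sup.mp hy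
  obtain ⟨m', hm', s', hs', rfl⟩ := Submodule.mem_sup.mp hx
  obtain ⟨c, rfl⟩ := Submodule.mem_span_singleton.mp hs
  obtain ⟨c', rfl⟩ := Submodule.mem_span_singleton.mp hs'
  have hm'm : B m' m = 0 := hM hm m' hm'
  have hm'v : B m' v = 0 := hv m' hm'
  have hvm : B v m = 0 := (hSym v m).trans (hv m hm)
  simp [hm'm, hm'v, hvm, hvv]

theorem mem_of_apply_eq_zero_of_forall_isotropic_mem (hSym : ∀ x y : V, B x y = B y x)
    (hiso : ∀ v ∈ perp B M, B v v = 0 → v ∈ M) {x z : V} (hx : x ∈ perp B M)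
    (hxx : B x x ≠ 0) (hz : z ∈ perp B M) (hxz : B x z = 0) : z ∈ M := by
  refine hiso z hz (by_contra fun hzz => hxx ?_)
  obtain ⟨t, ht⟩ := IsAlgClosed.exists_pow_nat_eq (-B x x / B z z) two_pos
  have hzx : B z x = 0 := (hSym z x).trans hxz
  have hw : x + t • z ∈ M := by
    refine hiso _ (add_mem hx (Submodule.smul_mem _ t hz)) ?_
    have ht' : t ^ 2 * B z z = -B x x := by rw [ht, div_mul_cancel₀ _ hzz]
    simp only [map_add, map_smul, LinearMap.add_apply, LinearMap.smul_apply, smul_eq_mul,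
      hxz, hzx]
    linear_combination ht'
  simpa [hzx] using hx _ hw

theorem exists_sub_smul_mem_of_forall_isotropic_mem (hSym : ∀ x y : V, B x y = B y x)
    (hiso : ∀ v ∈ perp B M, B v v = 0 → v ∈ M) :
    ∃ x ∈ perp B M, ∀ y ∈ perp B M, ∃ c : ℂ, y - c • x ∈ M := by
  by_cases hP : perp B M ≤ M
  · exact ⟨0, zero_mem _, fun y hy => ⟨0, by simpa using hP hy⟩⟩
  obtain ⟨x, hx, hxM⟩ := SetLike.not_le_iff_exists.mp hP
  have hxx : B x x ≠ 0 := fun h => hxM (hiso x hx h)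
  refine ⟨x, hx, fun y hy => ⟨B x y / B x x, ?_⟩⟩
  refine mem_of_apply_eq_zero_of_forall_isotropic_mem hSym hiso hx hxx
    (sub_mem hy (Submodule.smul_mem _ _ hx)) ?_
  simp [div_mul_cancel₀ _ hxx]

end Perp

theorem maximal_isotropic_iff_closed_and_codim_le_one_general
    {V : Type*} [AddCommGroup V] [Module ℂ V]
    (B : V →ₗ[ℂ] V →ₗ[ℂ] ℂ)
    (hSym : ∀ x y : V, B x y = B y x)
    (M : Submodule ℂ V) (hM : M ≤ perp B M) :
    (∀ N : Submodule ℂ V, N ≤ perp B N → M ≤ N → N = M) ↔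
      (perp B (perp B M) = M ∧
        Module.rank ℂ (↥(perp B M) ⧸ (M.comap (perp B M).subtype)) ≤ 1) := by
  constructor
  · intro hmax
    have hiso : ∀ v ∈ perp B M, B v v = 0 → v ∈ M := fun v hv hvv =>
      hmax _ (sup_span_singleton_le_perp hSym hM hv hvv) le_sup_left ▸
        Submodule.mem_sup_right (Submodule.mem_span_singleton_self v)
    exact ⟨hmax _ ((perp_anti hM).trans (le_perp_perp hSym)) (le_perp_perp hSym),
      Submodule.rank_quotient_comap_subtype_le_one_iff.mpr
        (exists_sub_smul_mem_of_forall_isotropic_mem hSym hiso)⟩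
  · rintro ⟨hclosed, hrank⟩ N hN hMN
    obtain hNM | hNP := Submodule.eq_or_eq_of_rank_quotient_comap_subtype_le_one hrank hMN
      (hN.trans (perp_anti hMN))
    · exact hNM
    · refine le_antisymm ?_ hMN
      calc N ≤ perp B N := hN
        _ = perp B (perp B M) := by rw [hNP]
        _ = M := hclosed

/-- for a nondegenerate symmetric bilinear form on a
countable-dimensional complex vector space `V`, an isotropic subspace `M` is
maximal isotropic if and only if `M` is closed (`M = M^⊥⊥`) and
`dim (M^⊥ / M) ≤ 1`. -/
theorem maximal_isotropic_iff_closed_and_codim_le_one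
    {V : Type*} [AddCommGroup V] [Module ℂ V]
    (hV : Module.rank ℂ V ≤ Cardinal.aleph0)
    (B : V →ₗ[ℂ] V →ₗ[ℂ] ℂ)
    (hB : ∀ x : V, (∀ y : V, B x y = 0) → x = 0)
    (hSym : ∀ x y : V, B x y = B y x)
    (M : Submodule ℂ V) (hM : M ≤ perp B M) :
    (∀ N : Submodule ℂ V, N ≤ perp B N → M ≤ N → N = M) ↔
      (perp B (perp B M) = M ∧
        Module.rank ℂ (↥(perp B M) ⧸ (M.comap (perp B M).subtype)) ≤ 1) :=
  maximal_isotropic_iff_closed_and_codim_le_one_general B hSym M hM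
end

section
/- Let 𝔟 ⊂ 𝔰𝔭(V) be a Borel (maximal locally solvable) subalgebra, M ⊆ V a maximal 𝔟-stable isotropic subspace, and G', G'' subspaces stable under 𝔟 with M ⊆ G' ⊆ G'' ⊆ M^⊥ and dim G''/G' = 1. Then G'' ∩ (G')^⊥ = M. -/
attribute [local instance 100] LieRing.ofAssociativeRing

/-- The Lie algebra of finite-rank endomorphisms of `V` that are skew-adjoint
with respect to `B`.  For a nondegenerate symmetric form this is
`𝔰𝔬(V) = ⋀²V`, and for a nondegenerate antisymmetric form it is
`𝔰𝔭(V) = Sym²(V)`, both inside `𝔤𝔩(V,V)`. -/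
def skewFR {V : Type*} [AddCommGroup V] [Module ℂ V]
    (B : V →ₗ[ℂ] V →ₗ[ℂ] ℂ) : LieSubalgebra ℂ (Module.End ℂ V) where
  carrier := {f | (∃ s : Set V, s.Finite ∧ LinearMap.range f ≤ Submodule.span ℂ s) ∧
    ∀ x y : V, B (f x) y = - B x (f y)}
  add_mem' := by
    rintro f g ⟨⟨s, hsf, hs⟩, hf⟩ ⟨⟨t, htf, ht⟩, hg⟩
    refine ⟨⟨s ∪ t, hsf.union htf, ?_⟩, fun x y => ?_⟩
    · rintro v ⟨x, rfl⟩
      have h1 : f x ∈ Submodule.span ℂ (s ∪ t) :=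
        Submodule.span_mono Set.subset_union_left (hs ⟨x, rfl⟩)
      have h2 : g x ∈ Submodule.span ℂ (s ∪ t) :=
        Submodule.span_mono Set.subset_union_right (ht ⟨x, rfl⟩)
      simpa [LinearMap.add_apply] using add_mem h1 h2
    · simp only [LinearMap.add_apply, map_add, LinearMap.add_apply, hf x y, hg x y]
      ring
  zero_mem' := by
    exact ⟨⟨∅, Set.finite_empty, by simp [LinearMap.range_zero]⟩, by simp⟩
  smul_mem' := by
    rintro c f ⟨⟨s, hsf, hs⟩, hf⟩
    refine ⟨⟨s, hsf, ?_⟩, fun x y => ?_⟩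
    · rintro v ⟨x, rfl⟩
      simpa [LinearMap.smul_apply] using Submodule.smul_mem _ c (hs ⟨x, rfl⟩)
    · simp only [LinearMap.smul_apply, map_smul, LinearMap.smul_apply, smul_eq_mul, hf x y]
      ring
  lie_mem' := by
    rintro f g ⟨⟨s, hsf, hs⟩, hf⟩ ⟨⟨t, htf, ht⟩, hg⟩
    have hbr : ∀ x : V, ⁅f, g⁆ x = f (g x) - g (f x) := by
      intro x
      rw [LieRing.of_associative_ring_bracket]
      simp [LinearMap.sub_apply, Module.End.mul_apply]
    constructor
    · refine ⟨s ∪ t, hsf.union htf, ?_⟩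
      rintro v ⟨x, rfl⟩
      have h1 : f (g x) ∈ Submodule.span ℂ (s ∪ t) :=
        Submodule.span_mono Set.subset_union_left (hs ⟨g x, rfl⟩)
      have h2 : g (f x) ∈ Submodule.span ℂ (s ∪ t) :=
        Submodule.span_mono Set.subset_union_right (ht ⟨f x, rfl⟩)
      rw [hbr]
      exact sub_mem h1 h2
    · intro x y
      rw [hbr, hbr]
      simp only [map_sub, LinearMap.sub_apply, map_sub, hf, hg]
      ring

/-- A Lie subalgebra is locally solvable if every finite subset of it is
contained in a solvable subalgebra (itself contained in the given one). -/
def LocallySolvable {L : Type*} [LieRing L] [LieAlgebra ℂ L]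
    (b : LieSubalgebra ℂ L) : Prop :=
  ∀ T : Finset L, (↑T : Set L) ⊆ (b : Set L) →
    ∃ K : LieSubalgebra ℂ L, (K : Set L) ⊆ (b : Set L) ∧
      LieAlgebra.IsSolvable K ∧ (↑T : Set L) ⊆ (K : Set L)

/-- A Borel subalgebra of `g`: a maximal locally solvable subalgebra of `g`. -/
def IsBorelIn {L : Type*} [LieRing L] [LieAlgebra ℂ L]
    (g b : LieSubalgebra ℂ L) : Prop :=
  b ≤ g ∧ LocallySolvable b ∧
    ∀ c : LieSubalgebra ℂ L, c ≤ g → LocallySolvable c → b ≤ c → c = b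

/-- A subspace `N` of `V` is stable under a family `b` of endomorphisms. -/
def StableUnder {V : Type*} [AddCommGroup V] [Module ℂ V]
    (b : LieSubalgebra ℂ (Module.End ℂ V)) (N : Submodule ℂ V) : Prop :=
  ∀ f ∈ b, ∀ x ∈ N, f x ∈ N

/-! If `G'` has codimension one in `G''`, any two vectors of `G''` are dependent modulo `G'`,
so the alternating form vanishes on `G'' ∩ G'^⊥`.  That space is `𝔟`-stable because `𝔟` acts
by skew maps, and it is orthogonal to `M` because `G'' ⊆ M^⊥`; hence `M + (G'' ∩ G'^⊥)` is a
`𝔟`-stable isotropic subspace containing `M`, and maximality of `M` forces `G'' ∩ G'^⊥ ⊆ M`. -/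

theorem exists_smul_add_smul_eq_zero_of_rank_le_one {K W : Type*} [DivisionRing K]
    [AddCommGroup W] [Module K W] (h : Module.rank K W ≤ 1) (x y : W) :
    ∃ s t : K, (s ≠ 0 ∨ t ≠ 0) ∧ s • x + t • y = 0 := by
  by_contra! hxy
  have hli : LinearIndependent K ![x, y] :=
    LinearIndependent.pair_iff.mpr fun s t hst => by
      by_contra hs
      exact hxy s t (not_and_or.mp hs) hst
  have := hli.cardinal_lift_le_rank.trans (Cardinal.lift_le.mpr h)
  simp at this

section Perp

variable {V : Type*} [AddCommGroup V] [Module ℂ V] {B : V →ₗ[ℂ] V →ₗ[ℂ] ℂ}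

theorem perp_sup (F G : Submodule ℂ V) : perp B (F ⊔ G) = perp B F ⊓ perp B G := by
  ext y
  refine ⟨fun hy => ⟨fun x hx => hy x (Submodule.mem_sup_left hx),
    fun x hx => hy x (Submodule.mem_sup_right hx)⟩, ?_⟩
  rintro ⟨hF, hG⟩ x hx
  obtain ⟨f, hf, g, hg, rfl⟩ := Submodule.mem_sup.mp hx
  simp [hF f hf, hG g hg]

theorem le_perp_comm (hAlt : ∀ x y : V, B x y = - B y x) {F G : Submodule ℂ V} :
    F ≤ perp B G ↔ G ≤ perp B F :=
  have key {F G : Submodule ℂ V} (h : F ≤ perp B G) : G ≤ perp B F := fun y hy x hx => by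
    rw [hAlt, h hx y hy, neg_zero]
  ⟨key, key⟩

theorem sup_le_perp_sup (hAlt : ∀ x y : V, B x y = - B y x) {M P : Submodule ℂ V}
    (hM : M ≤ perp B M) (hP : P ≤ perp B P) (hPM : P ≤ perp B M) :
    M ⊔ P ≤ perp B (M ⊔ P) := by
  rw [perp_sup]
  exact sup_le (le_inf hM ((le_perp_comm hAlt).mp hPM)) (le_inf hPM hP)

theorem inf_perp_le_perp_inf_perp (hAlt : ∀ x y : V, B x y = - B y x)
    {G' G'' : Submodule ℂ V} (hcodim : Module.rank ℂ (↥G'' ⧸ G'.comap G''.subtype) ≤ 1) :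
    G'' ⊓ perp B G' ≤ perp B (G'' ⊓ perp B G') := by
  rintro y ⟨hyG'', hyG'⟩ x ⟨hxG'', hxG'⟩
  obtain ⟨s, t, hst, hzero⟩ := exists_smul_add_smul_eq_zero_of_rank_le_one hcodim
    (Submodule.Quotient.mk ⟨x, hxG''⟩) (Submodule.Quotient.mk ⟨y, hyG''⟩)
  have hmem : s • x + t • y ∈ G' := by
    rw [← Submodule.Quotient.mk_smul, ← Submodule.Quotient.mk_smul, ← Submodule.Quotient.mk_add,
      Submodule.Quotient.mk_eq_zero] at hzero
    simpa using hzero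
  have hBxx : ∀ z : V, B z z = 0 := fun z => by linear_combination hAlt z z / 2
  -- pair `s • x + t • y ∈ G'` with `x` and with `y`
  have htx : t * B x y = 0 := by
    have := hxG' _ hmem
    simp only [map_add, map_smul, LinearMap.add_apply, LinearMap.smul_apply, smul_eq_mul,
      hBxx, hAlt y x] at this
    linear_combination -this
  have hsy : s * B x y = 0 := by
    have := hyG' _ hmem
    simpa [hBxx] using this
  rcases hst with hs | ht
  · exact (mul_eq_zero.mp hsy).resolve_left hs
  · exact (mul_eq_zero.mp htx).resolve_left ht

end Perp

section Stable

variable {V : Type*} [AddCommGroup V] [Module ℂ V] {b : LieSubalgebra ℂ (Module.End ℂ V)}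

theorem StableUnder.inf {F G : Submodule ℂ V} (hF : StableUnder b F) (hG : StableUnder b G) :
    StableUnder b (F ⊓ G) :=
  fun f hf x hx => ⟨hF f hf x hx.1, hG f hf x hx.2⟩

theorem StableUnder.sup {F G : Submodule ℂ V} (hF : StableUnder b F) (hG : StableUnder b G) :
    StableUnder b (F ⊔ G) := by
  intro f hf x hx
  obtain ⟨y, hy, z, hz, rfl⟩ := Submodule.mem_sup.mp hx
  rw [map_add]
  exact Submodule.add_mem_sup (hF f hf y hy) (hG f hf z hz)

theorem StableUnder.perp {B : V →ₗ[ℂ] V →ₗ[ℂ] ℂ} (hb : b ≤ skewFR B) {F : Submodule ℂ V}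
    (hF : StableUnder b F) : StableUnder b (perp B F) := fun f hf y hy x hx => by
  rw [← neg_eq_zero, ← (hb hf).2 x y, hy _ (hF f hf x hx)]

end Stable

theorem sp_inter_eq_max_stable_isotropic_general
    {V : Type*} [AddCommGroup V] [Module ℂ V]
    (B : V →ₗ[ℂ] V →ₗ[ℂ] ℂ)
    (hAlt : ∀ x y : V, B x y = - B y x)
    (b : LieSubalgebra ℂ (Module.End ℂ V))
    (hb : IsBorelIn (skewFR B) b)
    (M : Submodule ℂ V)
    (hMstab : StableUnder b M) (hMiso : M ≤ perp B M)
    (hMmax : ∀ N : Submodule ℂ V,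
      StableUnder b N → N ≤ perp B N → M ≤ N → N = M)
    (G' G'' : Submodule ℂ V)
    (hG'stab : StableUnder b G') (hG''stab : StableUnder b G'')
    (h1 : M ≤ G') (h2 : G' ≤ G'') (h3 : G'' ≤ perp B M)
    (hcodim : Module.rank ℂ (↥G'' ⧸ (G'.comap G''.subtype)) = 1) :
    G'' ⊓ perp B G' = M := by
  set P := G'' ⊓ perp B G'
  have hPiso : P ≤ perp B P := inf_perp_le_perp_inf_perp hAlt hcodim.le
  have hPstab : StableUnder b P := hG''stab.inf (hG'stab.perp hb.1)
  have hPM : P ≤ perp B M := inf_le_left.trans h3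
  have hMP : M ⊔ P = M :=
    hMmax _ (hMstab.sup hPstab) (sup_le_perp_sup hAlt hMiso hPiso hPM) le_sup_left
  have hMle : M ≤ P := le_inf (h1.trans h2) ((le_perp_comm hAlt).mp (h2.trans h3))
  exact le_antisymm (sup_eq_left.mp hMP) hMle

/-- let `𝔟 ⊂ 𝔰𝔭(V)` be a Borel (maximal locally solvable)
subalgebra, `M ⊆ V` a maximal `𝔟`-stable isotropic subspace, and `G'`, `G''`
`𝔟`-stable subspaces with `M ⊆ G' ⊆ G'' ⊆ M^⊥` and `dim G''/G' = 1`.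
Then `G'' ∩ (G')^⊥ = M`. -/
theorem sp_inter_eq_max_stable_isotropic
    {V : Type*} [AddCommGroup V] [Module ℂ V]
    (hV : Module.rank ℂ V ≤ Cardinal.aleph0)
    (B : V →ₗ[ℂ] V →ₗ[ℂ] ℂ)
    (hB : ∀ x : V, (∀ y : V, B x y = 0) → x = 0)
    (hAlt : ∀ x y : V, B x y = - B y x)
    (b : LieSubalgebra ℂ (Module.End ℂ V))
    (hb : IsBorelIn (skewFR B) b)
    (M : Submodule ℂ V)
    (hMstab : StableUnder b M) (hMiso : M ≤ perp B M)
    (hMmax : ∀ N : Submodule ℂ V,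
      StableUnder b N → N ≤ perp B N → M ≤ N → N = M)
    (G' G'' : Submodule ℂ V)
    (hG'stab : StableUnder b G') (hG''stab : StableUnder b G'')
    (h1 : M ≤ G') (h2 : G' ≤ G'') (h3 : G'' ≤ perp B M)
    (hcodim : Module.rank ℂ (↥G'' ⧸ (G'.comap G''.subtype)) = 1) :
    G'' ⊓ perp B G' = M :=
  sp_inter_eq_max_stable_isotropic_general B hAlt b hb M hMstab hMiso hMmax G' G'' hG'stab hG''stab
    h1 h2 h3 hcodim
end

section
/- Let 𝔟 be a Borel subalgebra of 𝔰𝔬(V) or 𝔰𝔭(V) and M a maximal isotropic 𝔟-stable subspace of V. Then there exists a maximal chain 𝒞 of closed 𝔟-stable subspaces of V containing M with the additional property that 𝒞^⊥ := {C^⊥ : C ∈ 𝒞} ⊆ 𝒞. -/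
attribute [local instance 100] LieRing.ofAssociativeRing

namespace Pf13Aux

variable {V : Type*} [AddCommGroup V] [Module ℂ V] (B : V →ₗ[ℂ] V →ₗ[ℂ] ℂ)

theorem mem_perp {F : Submodule ℂ V} {y : V} :
    y ∈ perp B F ↔ ∀ x ∈ F, B x y = 0 := Iff.rfl

theorem perp_antitone {F G : Submodule ℂ V} (h : F ≤ G) : perp B G ≤ perp B F :=
  fun y hy x hx => hy x (h hx)

theorem flip_zero (hsa : (∀ x y : V, B x y = B y x) ∨ (∀ x y : V, B x y = - B y x))
    {x y : V} (h : B x y = 0) : B y x = 0 := by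
  rcases hsa with h' | h' <;> rw [h' y x, h] <;> simp

theorem le_perp_perp (hsa : (∀ x y : V, B x y = B y x) ∨ (∀ x y : V, B x y = - B y x))
    (F : Submodule ℂ V) : F ≤ perp B (perp B F) :=
  fun x hx z hz => flip_zero B hsa (hz x hx)

theorem perp_perp_perp (hsa : (∀ x y : V, B x y = B y x) ∨ (∀ x y : V, B x y = - B y x))
    (F : Submodule ℂ V) : perp B (perp B (perp B F)) = perp B F :=
  le_antisymm (perp_antitone B (le_perp_perp B hsa F)) (le_perp_perp B hsa _)

theorem stable_perp {b : LieSubalgebra ℂ (Module.End ℂ V)} (hb : b ≤ skewFR B)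
    {N : Submodule ℂ V} (hN : StableUnder b N) : StableUnder b (perp B N) := by
  intro f hf y hy
  rw [mem_perp]
  intro x hx
  have hskew : ∀ u w : V, B (f u) w = - B u (f w) := (hb hf).2
  have h0 : B (f x) y = 0 := hy (f x) (hN f hf x hx)
  rw [hskew x y] at h0
  exact neg_eq_zero.mp h0

theorem isotropic_mem (hsa : (∀ x y : V, B x y = B y x) ∨ (∀ x y : V, B x y = - B y x))
    (M : Submodule ℂ V) (hMiso : M ≤ perp B M)
    (hMmax : ∀ N : Submodule ℂ V, N ≤ perp B N → M ≤ N → N = M)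
    {v : V} (hv : v ∈ perp B M) (hq : B v v = 0) : v ∈ M := by
  have hsup : (M ⊔ (Submodule.span ℂ {v})) ≤ perp B (M ⊔ (Submodule.span ℂ {v})) := by
    intro y hy
    rw [mem_perp]
    intro x hx
    rcases Submodule.mem_sup.mp hx with ⟨m, hm, w, hw, rfl⟩
    rcases Submodule.mem_span_singleton.mp hw with ⟨c, rfl⟩
    rcases Submodule.mem_sup.mp hy with ⟨m', hm', w', hw', rfl⟩
    rcases Submodule.mem_span_singleton.mp hw' with ⟨c', rfl⟩
    have h1 : B m m' = 0 := hMiso hm' m hm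
    have h2 : B m v = 0 := hv m hm
    have h3 : B v m' = 0 := flip_zero B hsa (hv m' hm')
    simp [map_add, map_smul, h1, h2, h3, hq]
  have heq : M ⊔ (Submodule.span ℂ {v}) = M := hMmax _ hsup le_sup_left
  exact heq ▸ Submodule.mem_sup_right (Submodule.mem_span_singleton_self v)

theorem M_closed (hsa : (∀ x y : V, B x y = B y x) ∨ (∀ x y : V, B x y = - B y x))
    (M : Submodule ℂ V) (hMiso : M ≤ perp B M)
    (hMmax : ∀ N : Submodule ℂ V, N ≤ perp B N → M ≤ N → N = M) :
    perp B (perp B M) = M := by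
  refine hMmax _ ?_ (le_perp_perp B hsa M)
  intro y hy
  rw [mem_perp]
  intro x hx
  exact hy x (perp_antitone B hMiso hx)

theorem quad_solve (a b c : ℂ) :
    ∃ s t : ℂ, ¬(s = 0 ∧ t = 0) ∧ a * s ^ 2 + b * (s * t) + c * t ^ 2 = 0 := by
  by_cases ha : a = 0
  · exact ⟨1, 0, by simp, by simp [ha]⟩
  · obtain ⟨s, hs⟩ := Complex.exists_root
      (f := Polynomial.C a * Polynomial.X ^ 2 + Polynomial.C b * Polynomial.X + Polynomial.C c)
      (by rw [Polynomial.degree_quadratic ha]; norm_num)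
    refine ⟨s, 1, by simp, ?_⟩
    simp only [Polynomial.IsRoot, Polynomial.eval_add, Polynomial.eval_mul,
      Polynomial.eval_C, Polynomial.eval_pow, Polynomial.eval_X] at hs
    linear_combination hs

theorem dep_mod (hsa : (∀ x y : V, B x y = B y x) ∨ (∀ x y : V, B x y = - B y x))
    (M : Submodule ℂ V) (hMiso : M ≤ perp B M)
    (hMmax : ∀ N : Submodule ℂ V, N ≤ perp B N → M ≤ N → N = M)
    {x y : V} (hx : x ∈ perp B M) (hy : y ∈ perp B M) :
    ∃ s t : ℂ, ¬(s = 0 ∧ t = 0) ∧ s • x + t • y ∈ M := by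
  obtain ⟨s, t, hst, h⟩ := quad_solve (B x x) (B x y + B y x) (B y y)
  refine ⟨s, t, hst, isotropic_mem B hsa M hMiso hMmax
    (add_mem (Submodule.smul_mem _ s hx) (Submodule.smul_mem _ t hy)) ?_⟩
  simp only [map_add, map_smul, LinearMap.add_apply, LinearMap.smul_apply, smul_eq_mul]
  linear_combination h

theorem interval_chain (hsa : (∀ x y : V, B x y = B y x) ∨ (∀ x y : V, B x y = - B y x))
    (M : Submodule ℂ V) (hMiso : M ≤ perp B M)
    (hMmax : ∀ N : Submodule ℂ V, N ≤ perp B N → M ≤ N → N = M)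
    {D E : Submodule ℂ V} (hMD : M ≤ D) (hD : D ≤ perp B M)
    (hME : M ≤ E) (hE : E ≤ perp B M) : D ≤ E ∨ E ≤ D := by
  by_contra hcon
  push_neg at hcon
  obtain ⟨h1, h2⟩ := hcon
  obtain ⟨d, hd, hdE⟩ := SetLike.not_le_iff_exists.mp h1
  obtain ⟨e, he, heD⟩ := SetLike.not_le_iff_exists.mp h2
  obtain ⟨s, t, hst, hm⟩ := dep_mod B hsa M hMiso hMmax (hD hd) (hE he)
  by_cases ht : t = 0
  · have hs : s ≠ 0 := fun h => hst ⟨h, ht⟩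
    rw [ht, zero_smul, add_zero] at hm
    exact hdE (by simpa [smul_smul, inv_mul_cancel₀ hs] using E.smul_mem s⁻¹ (hME hm))
  · refine heD ?_
    have hmem : t • e ∈ D := by
      have h' : t • e = (s • d + t • e) - s • d := by abel
      rw [h']
      exact sub_mem (hMD hm) (D.smul_mem s hd)
    simpa [smul_smul, inv_mul_cancel₀ ht] using D.smul_mem t⁻¹ hmem

theorem self_perp_cmp (hsa : (∀ x y : V, B x y = B y x) ∨ (∀ x y : V, B x y = - B y x))
    (M : Submodule ℂ V) (hMiso : M ≤ perp B M)
    (hMmax : ∀ N : Submodule ℂ V, N ≤ perp B N → M ≤ N → N = M)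
    {D : Submodule ℂ V}
    (h1 : D ≤ M ∨ M ≤ D) (h2 : D ≤ perp B M ∨ perp B M ≤ D) :
    D ≤ perp B D ∨ perp B D ≤ D := by
  have hMc : perp B (perp B M) = M := M_closed B hsa M hMiso hMmax
  rcases h1 with h1 | h1
  · exact Or.inl (h1.trans (hMiso.trans (perp_antitone B h1)))
  rcases h2 with h2 | h2
  · have ha : M ≤ perp B D := by
      have := perp_antitone B h2
      rwa [hMc] at this
    exact interval_chain B hsa M hMiso hMmax h1 h2 ha (perp_antitone B h1)
  · refine Or.inr ?_
    have h3 : perp B D ≤ M := by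
      have := perp_antitone B h2
      rwa [hMc] at this
    exact h3.trans (hMiso.trans h2)

end Pf13Aux

/-- let `𝔟` be a Borel subalgebra of `𝔰𝔬(V)` or `𝔰𝔭(V)` and `M`
a maximal isotropic `𝔟`-stable subspace of `V`.  Then there exists a maximal
chain `𝒞` of closed `𝔟`-stable subspaces of `V` containing `M` with the
additional property that `𝒞^⊥ ⊆ 𝒞`. -/
theorem exists_max_chain_of_closed_stable_selfperp
    {V : Type*} [AddCommGroup V] [Module ℂ V]
    (hV : Module.rank ℂ V ≤ Cardinal.aleph0)
    (B : V →ₗ[ℂ] V →ₗ[ℂ] ℂ)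
    (hB : ∀ x : V, (∀ y : V, B x y = 0) → x = 0)
    (hsymOrAlt : (∀ x y : V, B x y = B y x) ∨ (∀ x y : V, B x y = - B y x))
    (b : LieSubalgebra ℂ (Module.End ℂ V))
    (hb : IsBorelIn (skewFR B) b)
    (M : Submodule ℂ V)
    (hMstab : StableUnder b M) (hMiso : M ≤ perp B M)
    (hMmaxiso : ∀ N : Submodule ℂ V, N ≤ perp B N → M ≤ N → N = M) :
    ∃ 𝒞 : Set (Submodule ℂ V),
      𝒞 ⊆ {N | perp B (perp B N) = N ∧ StableUnder b N} ∧
      IsChain (· ≤ ·) 𝒞 ∧ M ∈ 𝒞 ∧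
      (∀ C ∈ 𝒞, perp B C ∈ 𝒞) ∧
      ∀ 𝒟 : Set (Submodule ℂ V),
        𝒟 ⊆ {N | perp B (perp B N) = N ∧ StableUnder b N} →
        IsChain (· ≤ ·) 𝒟 → 𝒞 ⊆ 𝒟 → 𝒟 = 𝒞 := by
  classical
  have hsub : b ≤ skewFR B := hb.1
  have hMc : perp B (perp B M) = M :=
    Pf13Aux.M_closed B hsymOrAlt M hMiso hMmaxiso
  set S : Set (Submodule ℂ V) :=
    {N | perp B (perp B N) = N ∧ StableUnder b N} with hS
  have hMS : M ∈ S := ⟨hMc, hMstab⟩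
  have hMpS : perp B M ∈ S :=
    ⟨Pf13Aux.perp_perp_perp B hsymOrAlt M, Pf13Aux.stable_perp B hsub hMstab⟩
  set P : Set (Set (Submodule ℂ V)) :=
    {𝒞 | 𝒞 ⊆ S ∧ IsChain (· ≤ ·) 𝒞 ∧ M ∈ 𝒞 ∧ ∀ C ∈ 𝒞, perp B C ∈ 𝒞} with hP
  have h0 : ({M, perp B M} : Set (Submodule ℂ V)) ∈ P := by
    refine ⟨?_, ?_, Or.inl rfl, ?_⟩
    · intro N hN
      rcases hN with rfl | hN
      · exact hMS
      · rw [Set.mem_singleton_iff] at hN; rw [hN]; exact hMpS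
    · intro x hx y hy hne
      rcases hx with rfl | hx <;> rcases hy with rfl | hy
      · exact absurd rfl hne
      · rw [Set.mem_singleton_iff] at hy; rw [hy]; exact Or.inl hMiso
      · rw [Set.mem_singleton_iff] at hx; rw [hx]; exact Or.inr hMiso
      · rw [Set.mem_singleton_iff] at hx hy; rw [hx, hy] at hne; exact absurd rfl hne
    · intro C hC
      rcases hC with rfl | hC
      · exact Or.inr rfl
      · rw [Set.mem_singleton_iff] at hC; rw [hC, hMc]; exact Or.inl rfl
  have hbound : ∀ c ⊆ P, IsChain (· ⊆ ·) c → c.Nonempty →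
      ∃ ub ∈ P, ∀ s ∈ c, s ⊆ ub := by
    intro c hcP hcchain hcne
    refine ⟨⋃₀ c, ⟨?_, ?_, ?_, ?_⟩, fun s hs => Set.subset_sUnion_of_mem hs⟩
    · rintro N ⟨c₁, hc₁, hN⟩
      exact (hcP hc₁).1 hN
    · intro x hx y hy hne
      obtain ⟨cx, hcx, hx⟩ := hx
      obtain ⟨cy, hcy, hy⟩ := hy
      rcases hcchain.total hcx hcy with h | h
      · exact (hcP hcy).2.1 (h hx) hy hne
      · exact (hcP hcx).2.1 hx (h hy) hne
    · obtain ⟨c₀, hc₀⟩ := hcne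
      exact ⟨c₀, hc₀, (hcP hc₀).2.2.1⟩
    · rintro C ⟨cx, hcx, hC⟩
      exact ⟨cx, hcx, (hcP hcx).2.2.2 C hC⟩
  obtain ⟨𝒞, -, hmax⟩ := zorn_subset_nonempty P hbound _ h0
  obtain ⟨h𝒞S, h𝒞chain, hM𝒞, h𝒞perp⟩ := hmax.1
  refine ⟨𝒞, h𝒞S, h𝒞chain, hM𝒞, h𝒞perp, ?_⟩
  intro 𝒟 h𝒟S h𝒟chain h𝒞𝒟
  refine Set.Subset.antisymm ?_ h𝒞𝒟
  intro D hD
  have hDS := h𝒟S hD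
  have hDc : perp B (perp B D) = D := hDS.1
  have hM𝒟 : M ∈ 𝒟 := h𝒞𝒟 hM𝒞
  have hMp𝒟 : perp B M ∈ 𝒟 := h𝒞𝒟 (h𝒞perp M hM𝒞)
  -- comparability of D with everything in 𝒞
  have hcmpD : ∀ C ∈ 𝒞, D ≤ C ∨ C ≤ D := fun C hC => h𝒟chain.total hD (h𝒞𝒟 hC)
  -- comparability of perp D with everything in 𝒞
  have hcmpDp : ∀ C ∈ 𝒞, perp B D ≤ C ∨ C ≤ perp B D := by
    intro C hC
    have hCc : perp B (perp B C) = C := (h𝒞S hC).1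
    rcases h𝒟chain.total hD (h𝒞𝒟 (h𝒞perp C hC)) with h | h
    · refine Or.inr ?_
      have := Pf13Aux.perp_antitone B h
      rwa [hCc] at this
    · refine Or.inl ?_
      have := Pf13Aux.perp_antitone B h
      rwa [hCc] at this
  -- comparability of D with perp D
  have hself : D ≤ perp B D ∨ perp B D ≤ D :=
    Pf13Aux.self_perp_cmp B hsymOrAlt M hMiso hMmaxiso
      (h𝒟chain.total hD hM𝒟) (h𝒟chain.total hD hMp𝒟)
  set 𝒞' : Set (Submodule ℂ V) := insert D (insert (perp B D) 𝒞) with h𝒞'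
  have htot : ∀ x ∈ 𝒞', ∀ y ∈ 𝒞', x ≤ y ∨ y ≤ x := by
    have baseD : ∀ y ∈ 𝒞', D ≤ y ∨ y ≤ D := by
      intro y hy
      rcases hy with rfl | rfl | hy
      · exact Or.inl le_rfl
      · exact hself
      · exact hcmpD y hy
    have baseDp : ∀ y ∈ 𝒞', perp B D ≤ y ∨ y ≤ perp B D := by
      intro y hy
      rcases hy with rfl | rfl | hy
      · exact hself.symm
      · exact Or.inl le_rfl
      · exact hcmpDp y hy
    intro x hx
    rcases hx with rfl | rfl | hx
    · exact baseD
    · exact baseDp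
    · intro y hy
      rcases hy with rfl | rfl | hy
      · exact (baseD x (Or.inr (Or.inr hx))).symm
      · exact (baseDp x (Or.inr (Or.inr hx))).symm
      · by_cases hxy : x = y
        · exact Or.inl hxy.le
        · exact h𝒞chain hx hy hxy
  have h𝒞'P : 𝒞' ∈ P := by
    refine ⟨?_, ?_, ?_, ?_⟩
    · intro N hN
      rcases hN with rfl | rfl | hN
      · exact hDS
      · exact ⟨Pf13Aux.perp_perp_perp B hsymOrAlt D,
          Pf13Aux.stable_perp B hsub hDS.2⟩
      · exact h𝒞S hN
    · exact fun x hx y hy _ => htot x hx y hy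
    · exact Or.inr (Or.inr hM𝒞)
    · intro C hC
      rcases hC with rfl | rfl | hC
      · exact Or.inr (Or.inl rfl)
      · rw [hDc]; exact Or.inl rfl
      · exact Or.inr (Or.inr (h𝒞perp C hC))
  have hsub' : 𝒞' ⊆ 𝒞 :=
    hmax.2 h𝒞'P (fun x hx => Or.inr (Or.inr hx))
  exact hsub' (Or.inl rfl)
end
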